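/- Let n ≥ 3, p > 1, and let ξ, μ, η ∈ ℝ^n satisfy |μ| = |η| = 1, η · ξ = η · μ = η · e_n = 0, and μ · ξ + (p−2)(μ · e_n)(ξ · e_n) = 0, where e_n is the n-th standard basis vector. Note that 1 + (p−2)(μ·e_n)² ≥ min(1, p−1) > 0 and t² + |ξ|² + (p−2)(ξ·e_n)² ≥ 0 for all t ∈ ℝ. For t ∈ ℝ define s = [ (t² + |ξ|² + (p−2)(ξ·e_n)²) / (1 + (p−2)(μ·e_n)²) ]^{1/2} and set ζ_± = ±s μ + i(ξ ± t η) ∈ ℂ^n. Then Σ_{j=1}^n (ζ_±)_j² + (p−2)(ζ_±)_n² = 0, i.e. ζ_± · (I + (p−2) e_n e_nᵀ) ζ_± = 0 for the bilinear (non-Hermitian) extension of the quadratic form to ℂ^n. -/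

import Mathlib

lemma aux12 (n : ℕ) (p : ℝ) (N : Fin n) (ξ μ η : Fin n → ℝ) (s t : ℝ)
    (hμ : ∑ j, μ j ^ 2 = 1) (hη : ∑ j, η j ^ 2 = 1)
    (hηξ : ∑ j, η j * ξ j = 0) (hημ : ∑ j, η j * μ j = 0) (hηN : η N = 0)
    (hμξ : (∑ j, μ j * ξ j) + (p - 2) * (μ N * ξ N) = 0)
    (hs2 : s ^ 2 * (1 + (p - 2) * μ N ^ 2) = t ^ 2 + (∑ j, ξ j ^ 2) + (p - 2) * ξ N ^ 2) :
    (∑ j, (((s * μ j : ℝ) : ℂ) + Complex.I * ((ξ j + t * η j : ℝ) : ℂ)) ^ 2)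
      + ((p : ℂ) - 2) * (((s * μ N : ℝ) : ℂ) + Complex.I * ((ξ N + t * η N : ℝ) : ℂ)) ^ 2 = 0 := by
  have key : ∀ j : Fin n, (((s * μ j : ℝ) : ℂ) + Complex.I * ((ξ j + t * η j : ℝ) : ℂ)) ^ 2
      = (((s * μ j) ^ 2 - (ξ j + t * η j) ^ 2 : ℝ) : ℂ)
        + Complex.I * ((2 * (s * μ j) * (ξ j + t * η j) : ℝ) : ℂ) := by
    intro j
    push_cast
    linear_combination (((ξ j : ℂ) + t * η j) ^ 2) * Complex.I_sq
  have hA : (∑ j, ((s * μ j) ^ 2 - (ξ j + t * η j) ^ 2))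
      + (p - 2) * ((s * μ N) ^ 2 - (ξ N + t * η N) ^ 2) = 0 := by
    have e1 : ∀ j : Fin n, (s * μ j) ^ 2 - (ξ j + t * η j) ^ 2
        = s ^ 2 * μ j ^ 2 - ξ j ^ 2 - 2 * t * (η j * ξ j) - t ^ 2 * η j ^ 2 := fun j => by ring
    simp_rw [e1, Finset.sum_sub_distrib, ← Finset.mul_sum, hμ, hη, hηξ]
    rw [hηN]
    linear_combination hs2
  have hB : (∑ j, 2 * (s * μ j) * (ξ j + t * η j))
      + (p - 2) * (2 * (s * μ N) * (ξ N + t * η N)) = 0 := by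
    have e2 : ∀ j : Fin n, 2 * (s * μ j) * (ξ j + t * η j)
        = 2 * s * (μ j * ξ j) + 2 * s * t * (η j * μ j) := fun j => by ring
    simp_rw [e2, Finset.sum_add_distrib, ← Finset.mul_sum, hημ]
    rw [hηN]
    linear_combination 2 * s * hμξ
  simp_rw [key]
  rw [Finset.sum_add_distrib, ← Finset.mul_sum, ← Complex.ofReal_sum, ← Complex.ofReal_sum]
  have hA' : ((∑ j, ((s * μ j) ^ 2 - (ξ j + t * η j) ^ 2) : ℝ) : ℂ)
      + ((p : ℂ) - 2) * (((s * μ N) ^ 2 - (ξ N + t * η N) ^ 2 : ℝ) : ℂ) = 0 := by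
    exact_mod_cast congrArg (Complex.ofReal) hA
  have hB' : ((∑ j, 2 * (s * μ j) * (ξ j + t * η j) : ℝ) : ℂ)
      + ((p : ℂ) - 2) * ((2 * (s * μ N) * (ξ N + t * η N) : ℝ) : ℂ) = 0 := by
    exact_mod_cast congrArg (Complex.ofReal) hB
  linear_combination hA' + Complex.I * hB'


theorem stmt_12 (n : ℕ) (hn : 3 ≤ n) (p : ℝ) (hp : 1 < p)
    (en : EuclideanSpace ℝ (Fin n))
    (hen : en = EuclideanSpace.single ⟨n - 1, by omega⟩ 1)
    (ξ μ η : EuclideanSpace ℝ (Fin n))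
    (hμ : ‖μ‖ = 1) (hη : ‖η‖ = 1)
    (hηξ : (inner ℝ η ξ : ℝ) = 0) (hημ : (inner ℝ η μ : ℝ) = 0)
    (hηe : (inner ℝ η en : ℝ) = 0)
    (hμξ : (inner ℝ μ ξ : ℝ) + (p - 2) * (inner ℝ μ en : ℝ) * (inner ℝ ξ en : ℝ) = 0)
    (t s : ℝ)
    (hs : s = Real.sqrt ((t ^ 2 + ‖ξ‖ ^ 2 + (p - 2) * (inner ℝ ξ en : ℝ) ^ 2)
            / (1 + (p - 2) * (inner ℝ μ en : ℝ) ^ 2)))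
    (ζp ζm : Fin n → ℂ)
    (hζp : ζp = fun j => ((s * μ j : ℝ) : ℂ) + Complex.I * ((ξ j + t * η j : ℝ) : ℂ))
    (hζm : ζm = fun j => ((-(s * μ j) : ℝ) : ℂ) + Complex.I * ((ξ j - t * η j : ℝ) : ℂ)) :
    (∑ j, ζp j ^ 2) + ((p : ℂ) - 2) * ζp ⟨n - 1, by omega⟩ ^ 2 = 0 ∧
    (∑ j, ζm j ^ 2) + ((p : ℂ) - 2) * ζm ⟨n - 1, by omega⟩ ^ 2 = 0 := by
  set N : Fin n := ⟨n - 1, by omega⟩ with hN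
  -- inner products as sums / coordinates
  have innerEq : ∀ x y : EuclideanSpace ℝ (Fin n), (inner ℝ x y : ℝ) = ∑ j, x j * y j := by
    intro x y
    simp [PiLp.inner_apply, RCLike.inner_apply, conj_trivial, mul_comm]
  have hxen : ∀ x : EuclideanSpace ℝ (Fin n), (inner ℝ x en : ℝ) = x N := by
    intro x
    rw [hen, EuclideanSpace.inner_single_right]
    simp
  have normsq : ∀ x : EuclideanSpace ℝ (Fin n), ∑ j, x j ^ 2 = ‖x‖ ^ 2 := by
    intro x
    rw [← real_inner_self_eq_norm_sq, innerEq]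
    exact Finset.sum_congr rfl fun j _ => pow_two (x j)
  have hμ1 : ∑ j, μ j ^ 2 = 1 := by rw [normsq, hμ]; norm_num
  have hη1 : ∑ j, η j ^ 2 = 1 := by rw [normsq, hη]; norm_num
  have hηξ' : ∑ j, η j * ξ j = 0 := by rw [← innerEq]; exact hηξ
  have hημ' : ∑ j, η j * μ j = 0 := by rw [← innerEq]; exact hημ
  have hηN : η N = 0 := by rw [← hxen η]; exact hηe
  have hμξ' : (∑ j, μ j * ξ j) + (p - 2) * (μ N * ξ N) = 0 := by
    have := hμξ
    rw [innerEq, hxen, hxen] at this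
    linarith
  -- s squared
  have hξN : ξ N ^ 2 ≤ ∑ j, ξ j ^ 2 :=
    Finset.single_le_sum (f := fun j => ξ j ^ 2) (fun i _ => sq_nonneg _) (Finset.mem_univ N)
  have hμN : μ N ^ 2 ≤ 1 := by
    rw [← hμ1]
    exact Finset.single_le_sum (f := fun j => μ j ^ 2) (fun i _ => sq_nonneg _) (Finset.mem_univ N)
  have hden : 0 < 1 + (p - 2) * μ N ^ 2 := by
    rcases eq_or_lt_of_le (sq_nonneg (μ N)) with h | h
    · nlinarith
    · nlinarith [mul_pos (sub_pos.2 hp) h]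
  have hnum : 0 ≤ t ^ 2 + (∑ j, ξ j ^ 2) + (p - 2) * ξ N ^ 2 := by
    nlinarith [sq_nonneg t, mul_nonneg (sub_nonneg.2 hp.le) (sq_nonneg (ξ N)), hξN]
  have hs2 : s ^ 2 * (1 + (p - 2) * μ N ^ 2) = t ^ 2 + (∑ j, ξ j ^ 2) + (p - 2) * ξ N ^ 2 := by
    rw [hxen, hxen, ← normsq] at hs
    rw [hs, Real.sq_sqrt (div_nonneg hnum hden.le)]
    exact div_mul_cancel₀ _ hden.ne'
  constructor
  · rw [hζp]
    exact aux12 n p N ξ μ η s t hμ1 hη1 hηξ' hημ' hηN hμξ' hs2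
  · have hfun : (fun j => ((-(s * μ j) : ℝ) : ℂ) + Complex.I * ((ξ j - t * η j : ℝ) : ℂ))
        = fun j => (((-s) * μ j : ℝ) : ℂ) + Complex.I * ((ξ j + (-t) * η j : ℝ) : ℂ) := by
      funext j
      push_cast
      ring
    rw [hζm, hfun]
    exact aux12 n p N ξ μ η (-s) (-t) hμ1 hη1 hηξ' hημ' hηN hμξ'
      (by linear_combination hs2)
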